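/- arXiv:2208.08716 — 7 statements merged into one kernel-verified Lean document; each statement's English description precedes it below -/
import Mathlib

section
/- Let t ≥ 1 be an integer, let w_M, w_N ∈ ℤ, and let p_1 < p_2 < ⋯ < p_{t+1} and a_1 < a_2 < ⋯ < a_t be strictly increasing integer sequences satisfying p_i + p_{t+2−i} = w_M for all 1 ≤ i ≤ t+1 and a_j + a_{t+1−j} = w_N for all 1 ≤ j ≤ t. Assume there exists Q ∈ ℤ such that −p_{t+2−i} < a_i + Q ≤ −p_{t+1−i} for all 1 ≤ i ≤ t. Set q★ := min_{1≤i≤t}(p_{t+2−i} + a_i), and let H be the multiset of integers {p_i + a_j : 1 ≤ i ≤ t+1, 1 ≤ j ≤ t}, each pair (i,j) contributing exactly one element, so that H has t(t+1) elements counted with multiplicity. Then the number of elements of H (with multiplicity) that are strictly less than q★ equals the number of elements of H that are ≥ q★, and both numbers equal t(t+1)/2. -/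
/-!
Since `p` is increasing, the interlace condition gives `p i + a j ≤ -Q < q★` whenever
`i + j ≤ t + 1`, while minimality of `q★` gives `q★ ≤ p i + a j` whenever `i + j ≥ t + 2`.
So the pairs below `q★` form the triangle `i + j ≤ t + 1` of the `(t + 1) × t` grid, and the
reflection `(i, j) ↦ (t + 2 - i, t + 1 - j)` exchanges it with its complement.
-/

open Finset

theorem card_filter_add_le_eq_card_filter_le_add (m n k : ℕ) :
    ((Icc 1 m ×ˢ Icc 1 n).filter (fun ij => ij.1 + ij.2 ≤ k)).card =
      ((Icc 1 m ×ˢ Icc 1 n).filter (fun ij => m + n + 2 ≤ ij.1 + ij.2 + k)).card := by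
  let reflect : ℕ × ℕ → ℕ × ℕ := fun ij => (m + 1 - ij.1, n + 1 - ij.2)
  refine card_nbij' reflect reflect ?_ ?_ ?_ ?_ <;>
  · intro ij hij
    simp only [coe_filter, mem_product, mem_Icc, Set.mem_ofPred_eq, reflect] at hij ⊢
    first
      | omega
      | ext <;> simp only <;> omega

section Interlace

variable {t : ℕ} {p a : ℕ → ℤ} {Q q : ℤ}

theorem add_lt_of_add_le_succ (hp : MonotoneOn p (Set.Icc 1 (t + 1)))
    (hQ : ∀ j, 1 ≤ j → j ≤ t → a j + Q ≤ -p (t + 1 - j)) (hq : -Q < q)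
    {i j : ℕ} (hi : 1 ≤ i) (hj : 1 ≤ j) (hij : i + j ≤ t + 1) : p i + a j < q := by
  have hpi : p i ≤ p (t + 1 - j) :=
    hp ⟨hi, by omega⟩ ⟨by omega, by omega⟩ (by omega)
  linarith [hQ j hj (by omega)]

theorem le_add_of_succ_succ_le_add (hp : MonotoneOn p (Set.Icc 1 (t + 1)))
    (hq : ∀ j, 1 ≤ j → j ≤ t → q ≤ p (t + 2 - j) + a j)
    {i j : ℕ} (hi : i ≤ t + 1) (hj₁ : 1 ≤ j) (hj : j ≤ t) (hij : t + 2 ≤ i + j) :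
    q ≤ p i + a j := by
  have hpi : p (t + 2 - j) ≤ p i :=
    hp ⟨by omega, by omega⟩ ⟨by omega, hi⟩ (by omega)
  linarith [hq j hj₁ hj]

theorem add_lt_iff_add_le_succ (hp : MonotoneOn p (Set.Icc 1 (t + 1)))
    (hQ : ∀ j, 1 ≤ j → j ≤ t → a j + Q ≤ -p (t + 1 - j)) (hQq : -Q < q)
    (hq : ∀ j, 1 ≤ j → j ≤ t → q ≤ p (t + 2 - j) + a j)
    {i j : ℕ} (hi : i ∈ Icc 1 (t + 1)) (hj : j ∈ Icc 1 t) :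
    p i + a j < q ↔ i + j ≤ t + 1 := by
  rw [mem_Icc] at hi hj
  refine ⟨fun hlt => ?_, add_lt_of_add_le_succ hp hQ hQq hi.1 hj.1⟩
  by_contra! hgt
  exact (le_add_of_succ_succ_le_add hp hq hi.2 hj.1 hj.2 hgt).not_gt hlt

end Interlace

open Finset in
theorem stmt_0_general (t : ℕ) (p a : ℕ → ℤ)
    (hp : ∀ i j, 1 ≤ i → i < j → j ≤ t + 1 → p i < p j)
    (hQ : ∃ Q : ℤ, ∀ i, 1 ≤ i → i ≤ t →
      -p (t + 2 - i) < a i + Q ∧ a i + Q ≤ -p (t + 1 - i))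
    (qstar : ℤ)
    (hqstar : IsLeast {v : ℤ | ∃ i, 1 ≤ i ∧ i ≤ t ∧ v = p (t + 2 - i) + a i} qstar) :
    ((Icc 1 (t + 1) ×ˢ Icc 1 t).filter (fun ij => p ij.1 + a ij.2 < qstar)).card
        = ((Icc 1 (t + 1) ×ˢ Icc 1 t).filter (fun ij => qstar ≤ p ij.1 + a ij.2)).card ∧
    ((Icc 1 (t + 1) ×ˢ Icc 1 t).filter (fun ij => p ij.1 + a ij.2 < qstar)).card
        = t * (t + 1) / 2 ∧
    ((Icc 1 (t + 1) ×ˢ Icc 1 t).filter (fun ij => qstar ≤ p ij.1 + a ij.2)).card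
        = t * (t + 1) / 2 := by
  obtain ⟨Q, hQ⟩ := hQ
  obtain ⟨⟨i₀, hi₀, hi₀t, hq₀⟩, hmin⟩ := hqstar
  have hmono : MonotoneOn p (Set.Icc 1 (t + 1)) :=
    StrictMonoOn.monotoneOn fun i hi j hj hij => hp i j hi.1 hij hj.2
  have hlt_iff : ∀ ij ∈ Icc 1 (t + 1) ×ˢ Icc 1 t,
      p ij.1 + a ij.2 < qstar ↔ ij.1 + ij.2 ≤ t + 1 :=
    fun ij hij => add_lt_iff_add_le_succ hmono (fun j hj₁ hj => (hQ j hj₁ hj).2)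
      (by linarith [(hQ i₀ hi₀ hi₀t).1]) (fun j hj₁ hj => hmin ⟨j, hj₁, hj, rfl⟩)
      (mem_product.1 hij).1 (mem_product.1 hij).2
  have hge_iff : ∀ ij ∈ Icc 1 (t + 1) ×ˢ Icc 1 t,
      qstar ≤ p ij.1 + a ij.2 ↔ t + 1 + t + 2 ≤ ij.1 + ij.2 + (t + 1) := fun ij hij => by
    rw [← not_lt, hlt_iff ij hij]
    omega
  have hhalves : ((Icc 1 (t + 1) ×ˢ Icc 1 t).filter (fun ij => p ij.1 + a ij.2 < qstar)).card
      = ((Icc 1 (t + 1) ×ˢ Icc 1 t).filter (fun ij => qstar ≤ p ij.1 + a ij.2)).card := by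
    rw [filter_congr hlt_iff, filter_congr hge_iff]
    exact card_filter_add_le_eq_card_filter_le_add (t + 1) t (t + 1)
  have htotal : ((Icc 1 (t + 1) ×ˢ Icc 1 t).filter (fun ij => p ij.1 + a ij.2 < qstar)).card
      + ((Icc 1 (t + 1) ×ˢ Icc 1 t).filter (fun ij => qstar ≤ p ij.1 + a ij.2)).card
      = t * (t + 1) := by
    simpa only [not_lt, card_product, Nat.card_Icc, add_tsub_cancel_right, mul_comm]
      using card_filter_add_card_filter_not (s := Icc 1 (t + 1) ×ˢ Icc 1 t)
        (fun ij => p ij.1 + a ij.2 < qstar)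
  refine ⟨hhalves, ?_, ?_⟩ <;> omega

open Finset in
/-- Real-place case of the combinatorial lemma on Hodge types (Lemma 4.6). -/
theorem stmt_0 (t : ℕ) (ht : 1 ≤ t) (wM wN : ℤ) (p a : ℕ → ℤ)
    (hp : ∀ i j, 1 ≤ i → i < j → j ≤ t + 1 → p i < p j)
    (ha : ∀ i j, 1 ≤ i → i < j → j ≤ t → a i < a j)
    (hpw : ∀ i, 1 ≤ i → i ≤ t + 1 → p i + p (t + 2 - i) = wM)
    (haw : ∀ j, 1 ≤ j → j ≤ t → a j + a (t + 1 - j) = wN)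
    (hQ : ∃ Q : ℤ, ∀ i, 1 ≤ i → i ≤ t →
      -p (t + 2 - i) < a i + Q ∧ a i + Q ≤ -p (t + 1 - i))
    (qstar : ℤ)
    (hqstar : IsLeast {v : ℤ | ∃ i, 1 ≤ i ∧ i ≤ t ∧ v = p (t + 2 - i) + a i} qstar) :
    ((Icc 1 (t + 1) ×ˢ Icc 1 t).filter (fun ij => p ij.1 + a ij.2 < qstar)).card
        = ((Icc 1 (t + 1) ×ˢ Icc 1 t).filter (fun ij => qstar ≤ p ij.1 + a ij.2)).card ∧
    ((Icc 1 (t + 1) ×ˢ Icc 1 t).filter (fun ij => p ij.1 + a ij.2 < qstar)).card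
        = t * (t + 1) / 2 ∧
    ((Icc 1 (t + 1) ×ˢ Icc 1 t).filter (fun ij => qstar ≤ p ij.1 + a ij.2)).card
        = t * (t + 1) / 2 :=
  stmt_0_general t p a hp hQ qstar hqstar
end

section
/- Let t ≥ 1 be an integer and Q ∈ ℤ. Let P and P′ be non-decreasing integer sequences of length t+1, and let A and A′ be non-decreasing integer sequences of length t. Assume that for every R ∈ {P, P′}, every B ∈ {A, A′}, and every 1 ≤ i ≤ t one has −R_{t+2−i} < B_i + Q ≤ −R_{t+1−i}. Then for all integers α and k with 2 ≤ α ≤ t+1 and 1 ≤ k ≤ α−1, all 1 ≤ i ≤ t, and all choices R, R′ ∈ {P, P′} and B, B′ ∈ {A, A′}, the strict inequality R′_{α−k} + B′_k < R_{t+2−i} + B_i holds. -/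
/-!
The right-hand interlace inequality at `k` gives `B'_k + Q ≤ -R'_{t+1-k}`, and since
`α - k ≤ t + 1 - k` and `R'` is non-decreasing, `R'_{α-k} + B'_k ≤ -Q`. The left-hand
interlace inequality at `i` gives `-Q < R_{t+2-i} + B_i`.
-/

open Set

lemma monotoneOn_Icc_of_le_succ {β : Type*} [Preorder β] {f : ℕ → β} {a b : ℕ}
    (hf : ∀ i, a ≤ i → i < b → f i ≤ f (i + 1)) : MonotoneOn f (Icc a b) :=
  monotoneOn_of_le_succ ordConnected_Icc fun i _ hi hsucc ↦ hf i hi.1 (by simpa using hsucc.2)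

theorem stmt_2_general (t : ℕ) (Q : ℤ) (P P' A A' : ℕ → ℤ)
    (hP : ∀ i, 1 ≤ i → i ≤ t → P i ≤ P (i + 1))
    (hP' : ∀ i, 1 ≤ i → i ≤ t → P' i ≤ P' (i + 1))
    (hQ : ∀ R ∈ ({P, P'} : Set (ℕ → ℤ)), ∀ B ∈ ({A, A'} : Set (ℕ → ℤ)),
      ∀ i, 1 ≤ i → i ≤ t → -R (t + 2 - i) < B i + Q ∧ B i + Q ≤ -R (t + 1 - i)) :
    ∀ α k i, 2 ≤ α → α ≤ t + 1 → 1 ≤ k → k ≤ α - 1 → 1 ≤ i → i ≤ t →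
      ∀ R ∈ ({P, P'} : Set (ℕ → ℤ)), ∀ R' ∈ ({P, P'} : Set (ℕ → ℤ)),
      ∀ B ∈ ({A, A'} : Set (ℕ → ℤ)), ∀ B' ∈ ({A, A'} : Set (ℕ → ℤ)),
        R' (α - k) + B' k < R (t + 2 - i) + B i := by
  intro α k i hα2 hαt hk1 hkα hi1 hit R hR R' hR' B hB B' hB'
  have hmono : MonotoneOn R' (Icc 1 (t + 1)) := by
    rcases hR' with rfl | rfl
    exacts [monotoneOn_Icc_of_le_succ fun j hj hjt ↦ hP j hj (by omega),
      monotoneOn_Icc_of_le_succ fun j hj hjt ↦ hP' j hj (by omega)]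
  have hlower := (hQ R hR B hB i hi1 hit).1
  have hupper := (hQ R' hR' B' hB' k hk1 (by omega)).2
  have hR'_le : R' (α - k) ≤ R' (t + 1 - k) :=
    hmono ⟨by omega, by omega⟩ ⟨by omega, by omega⟩ (by omega)
  linarith

/-- Claim (i) in the proof of the combinatorial lemma on Hodge types (Lemma 4.6). -/
theorem stmt_2 (t : ℕ) (ht : 1 ≤ t) (Q : ℤ) (P P' A A' : ℕ → ℤ)
    (hP : ∀ i, 1 ≤ i → i ≤ t → P i ≤ P (i + 1))
    (hP' : ∀ i, 1 ≤ i → i ≤ t → P' i ≤ P' (i + 1))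
    (hA : ∀ i, 1 ≤ i → i + 1 ≤ t → A i ≤ A (i + 1))
    (hA' : ∀ i, 1 ≤ i → i + 1 ≤ t → A' i ≤ A' (i + 1))
    (hQ : ∀ R ∈ ({P, P'} : Set (ℕ → ℤ)), ∀ B ∈ ({A, A'} : Set (ℕ → ℤ)),
      ∀ i, 1 ≤ i → i ≤ t → -R (t + 2 - i) < B i + Q ∧ B i + Q ≤ -R (t + 1 - i)) :
    ∀ α k i, 2 ≤ α → α ≤ t + 1 → 1 ≤ k → k ≤ α - 1 → 1 ≤ i → i ≤ t →
      ∀ R ∈ ({P, P'} : Set (ℕ → ℤ)), ∀ R' ∈ ({P, P'} : Set (ℕ → ℤ)),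
      ∀ B ∈ ({A, A'} : Set (ℕ → ℤ)), ∀ B' ∈ ({A, A'} : Set (ℕ → ℤ)),
        R' (α - k) + B' k < R (t + 2 - i) + B i :=
  stmt_2_general t Q P P' A A' hP hP' hQ
end

section
/- Let F be a totally real number field, n ≥ 1 an integer, and w an even integer. For each embedding τ : F → ℂ let μ_τ = (μ_{τ,1}, …, μ_{τ,n+1}) ∈ ℤ^{n+1} be dominant (μ_{τ,1} ≥ μ_{τ,2} ≥ ⋯ ≥ μ_{τ,n+1}) and pure of weight w (μ_{τ,i} + μ_{τ,n+2−i} = w for all 1 ≤ i ≤ n+1). Then there exist an integer w′ with w′ ≡ w (mod 2) and, for each embedding τ : F → ℂ, a tuple ν_τ = (ν_{τ,1}, …, ν_{τ,n}) ∈ ℤ^n, such that each ν_τ is dominant (ν_{τ,1} ≥ ⋯ ≥ ν_{τ,n}) and pure of weight w′ (ν_{τ,i} + ν_{τ,n+1−i} = w′ for all i), and there exists m₀ ∈ ℤ with −μ_{τ,n+2−i} ≥ ν_{τ,i} + m₀ ≥ −μ_{τ,n+1−i} for every embedding τ and every 1 ≤ i ≤ n. -/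
/-!
Write `ℓ_i = -μ_{n+2-i}` for the dual weight, which is dominant and pure of weight `-w = 2c`.
Take `ν_i` to be the centre `c` clamped to the interval `[ℓ_{i+1}, ℓ_i]`. Adjacent intervals
move down together, so `ν` is dominant; purity of `ℓ` says that the intervals for `i` and
`n + 1 - i` are mirror images under `x ↦ 2c - x`, which fixes `c`, so `ν` is pure of weight `2c`;
and `ν` interlaces `ℓ` by construction, with `m₀ = 0`.
-/

namespace Weight

/-- Entries are indexed `1, …, N`. -/
def IsDominant (N : ℕ) (μ : ℕ → ℤ) : Prop :=
  ∀ i, 1 ≤ i → i < N → μ (i + 1) ≤ μ i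

def IsPure (N : ℕ) (w : ℤ) (μ : ℕ → ℤ) : Prop :=
  ∀ i, 1 ≤ i → i ≤ N → μ i + μ (N + 1 - i) = w

def dual (N : ℕ) (μ : ℕ → ℤ) (i : ℕ) : ℤ :=
  -μ (N + 1 - i)

variable {N : ℕ} {μ : ℕ → ℤ}

theorem IsDominant.dual (h : IsDominant N μ) : IsDominant N (dual N μ) := by
  intro i hi hiN
  have := h (N - i) (by omega) (by omega)
  simp only [Weight.dual, show N + 1 - (i + 1) = N - i by omega,
    show N + 1 - i = N - i + 1 by omega]
  omega

theorem IsPure.dual {w : ℤ} (h : IsPure N w μ) : IsPure N (-w) (dual N μ) := by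
  intro i hi hiN
  have := h i hi hiN
  simp only [Weight.dual, show N + 1 - (N + 1 - i) = i by omega]
  omega

def clampedCentre (ℓ : ℕ → ℤ) (c : ℤ) (i : ℕ) : ℤ :=
  max (ℓ (i + 1)) (min c (ℓ i))

variable {n : ℕ} {ℓ : ℕ → ℤ}

theorem clampedCentre_mem (hℓ : IsDominant (n + 1) ℓ) (c : ℤ) {i : ℕ}
    (hi : 1 ≤ i) (hin : i ≤ n) :
    ℓ (i + 1) ≤ clampedCentre ℓ c i ∧ clampedCentre ℓ c i ≤ ℓ i := by
  have := hℓ i hi (by omega)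
  unfold clampedCentre
  omega

theorem isDominant_clampedCentre (hℓ : IsDominant (n + 1) ℓ) (c : ℤ) :
    IsDominant n (clampedCentre ℓ c) := by
  intro i hi hin
  have := hℓ i hi (by omega)
  have := hℓ (i + 1) (by omega) (by omega)
  unfold clampedCentre
  omega

theorem isPure_clampedCentre (hℓ : IsDominant (n + 1) ℓ) {c : ℤ}
    (hpure : IsPure (n + 1) (2 * c) ℓ) :
    IsPure n (2 * c) (clampedCentre ℓ c) := by
  intro i hi hin
  have := hℓ i hi (by omega)
  have hlow := hpure i hi (by omega)
  have hhigh := hpure (i + 1) (by omega) (by omega)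
  rw [show n + 1 + 1 - (i + 1) = n + 1 - i by omega] at hhigh
  simp only [clampedCentre, show n + 1 - i + 1 = n + 1 + 1 - i by omega]
  omega

end Weight

open Weight in
theorem stmt_4_general (F : Type*) [Field F]
    (n : ℕ) (w : ℤ) (hw : Even w)
    (μ : (F →+* ℂ) → ℕ → ℤ)
    (hdom : ∀ τ : F →+* ℂ, ∀ i, 1 ≤ i → i ≤ n → μ τ (i + 1) ≤ μ τ i)
    (hpure : ∀ τ : F →+* ℂ, ∀ i, 1 ≤ i → i ≤ n + 1 → μ τ i + μ τ (n + 2 - i) = w) :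
    ∃ w' : ℤ, w' % 2 = w % 2 ∧
    ∃ ν : (F →+* ℂ) → ℕ → ℤ,
      (∀ τ : F →+* ℂ, ∀ i, 1 ≤ i → i < n → ν τ (i + 1) ≤ ν τ i) ∧
      (∀ τ : F →+* ℂ, ∀ i, 1 ≤ i → i ≤ n → ν τ i + ν τ (n + 1 - i) = w') ∧
      ∃ m₀ : ℤ, ∀ τ : F →+* ℂ, ∀ i, 1 ≤ i → i ≤ n →
        ν τ i + m₀ ≤ -μ τ (n + 2 - i) ∧ -μ τ (n + 1 - i) ≤ ν τ i + m₀ := by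
  obtain ⟨c, rfl⟩ := hw
  have hdual_dom (τ : F →+* ℂ) : IsDominant (n + 1) (dual (n + 1) (μ τ)) :=
    IsDominant.dual fun i hi hin => hdom τ i hi (by omega)
  have hdual_pure (τ : F →+* ℂ) : IsPure (n + 1) (2 * -c) (dual (n + 1) (μ τ)) := by
    simpa only [neg_add, two_mul] using IsPure.dual (hpure τ)
  refine ⟨2 * -c, by omega, fun τ => clampedCentre (dual (n + 1) (μ τ)) (-c),
    fun τ => isDominant_clampedCentre (hdual_dom τ) _,
    fun τ => isPure_clampedCentre (hdual_dom τ) (hdual_pure τ), 0, fun τ i hi hin => ?_⟩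
  have := clampedCentre_mem (hdual_dom τ) (-c) hi hin
  simp only [dual, add_zero, show n + 1 + 1 - (i + 1) = n + 1 - i by omega] at this ⊢
  exact this.symm

/-- Totally real case of Lemma 7.2 on weights. -/
theorem stmt_4 (F : Type*) [Field F] [NumberField F]
    (htr : ∀ τ : F →+* ℂ, NumberField.ComplexEmbedding.IsReal τ)
    (n : ℕ) (hn : 1 ≤ n) (w : ℤ) (hw : Even w)
    (μ : (F →+* ℂ) → ℕ → ℤ)
    (hdom : ∀ τ : F →+* ℂ, ∀ i, 1 ≤ i → i ≤ n → μ τ (i + 1) ≤ μ τ i)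
    (hpure : ∀ τ : F →+* ℂ, ∀ i, 1 ≤ i → i ≤ n + 1 → μ τ i + μ τ (n + 2 - i) = w) :
    ∃ w' : ℤ, w' % 2 = w % 2 ∧
    ∃ ν : (F →+* ℂ) → ℕ → ℤ,
      (∀ τ : F →+* ℂ, ∀ i, 1 ≤ i → i < n → ν τ (i + 1) ≤ ν τ i) ∧
      (∀ τ : F →+* ℂ, ∀ i, 1 ≤ i → i ≤ n → ν τ i + ν τ (n + 1 - i) = w') ∧
      ∃ m₀ : ℤ, ∀ τ : F →+* ℂ, ∀ i, 1 ≤ i → i ≤ n →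
        ν τ i + m₀ ≤ -μ τ (n + 2 - i) ∧ -μ τ (n + 1 - i) ≤ ν τ i + m₀ :=
  stmt_4_general F n w hw μ hdom hpure
end

section
/- Let F be a totally imaginary number field (for instance a CM field), n ≥ 1 an integer, and w ∈ ℤ. For each embedding τ : F → ℂ write ρτ for the conjugate embedding (the composition of τ with complex conjugation). Let μ assign to each embedding τ a tuple μ_τ = (μ_{τ,1}, …, μ_{τ,n+1}) ∈ ℤ^{n+1} such that: each μ_τ is dominant (μ_{τ,1} ≥ ⋯ ≥ μ_{τ,n+1}); μ is pure of weight w (μ_{ρτ,i} = w − μ_{τ,n+2−i} for all τ and all 1 ≤ i ≤ n+1); and μ is in good position (min{μ_{τ,i}, w − μ_{τ,n+2−i}} ≥ max{μ_{τ,i+1}, w − μ_{τ,n+1−i}} for all τ and all 1 ≤ i ≤ n). Then there exist an integer w′ with w′ ≡ w (mod 2) and a family ν assigning to each embedding τ a tuple ν_τ = (ν_{τ,1}, …, ν_{τ,n}) ∈ ℤ^n such that: each ν_τ is dominant; ν is pure of weight w′ (ν_{ρτ,i} = w′ − ν_{τ,n+1−i} for all τ, i); ν is in good position (min{ν_{τ,i},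 w′ − ν_{τ,n+1−i}} ≥ max{ν_{τ,i+1}, w′ − ν_{τ,n−i}} for all τ and all 1 ≤ i ≤ n−1); and there exists m₀ ∈ ℤ such that for every embedding τ, every τ̃, τ̃′ ∈ {τ, ρτ}, and every 1 ≤ i ≤ n, one has −μ_{τ̃,n+2−i} ≥ ν_{τ̃′,i} + m₀ ≥ −μ_{τ̃,n+1−i} (the strong interlace condition). -/
/-!
Take `w' = -w` and `m₀ = 0`. Strong interlacing then asks that `ν_{τ'} i` lie in `[L_τ i, U_τ i]`
for `τ' ∈ {τ, ρτ}`, where `U_τ i` is the minimum of `-μ_{τ̃, n+2-i}` and `L_τ i` the maximum of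
`-μ_{τ̃, n+1-i}` over `τ̃ ∈ {τ, ρτ}`. These bounds are `ρ`-invariant; purity of `μ` turns its good
position into `L ≤ U` and gives `L_τ (n+1-i) = -w - U_τ i`, and dominance makes both antitone
in `i`. So `ν_τ i := U_τ i` on the lower half of the indices and `L_τ i` on the upper half is
pure of weight `-w`. At the middle index (`n` odd) purity forces `ν_τ + ν_{ρτ} = L + U`, which
is met by taking `U` at one embedding of each pair `{τ, ρτ}` and `L` at the other; this needs
`ρτ ≠ τ`, i.e. that `F` has no real embeddings. By purity, good position of `ν` is dominance
across the pair.
-/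

theorem Function.Involutive.exists_bool_apply_eq_not {α : Type*} {σ : α → α}
    (hσ : Function.Involutive σ) (hfix : ∀ x, σ x ≠ x) : ∃ s : α → Bool, ∀ x, s (σ x) = !s x := by
  classical
  let _ : LinearOrder α := IsWellOrder.linearOrder WellOrderingRel
  refine ⟨fun x => decide (x < σ x), fun x => ?_⟩
  rcases lt_or_gt_of_ne (hfix x) with h | h
  · simp [hσ x, h, h.not_gt]
  · simp [hσ x, h, h.not_gt]

section Interlace

variable {ι : Type*} (ρ : ι → ι) (μ : ι → ℕ → ℤ) (n : ℕ)

def interlaceUpper (τ : ι) (i : ℕ) : ℤ := min (-μ τ (n + 2 - i)) (-μ (ρ τ) (n + 2 - i))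

def interlaceLower (τ : ι) (i : ℕ) : ℤ := max (-μ τ (n + 1 - i)) (-μ (ρ τ) (n + 1 - i))

def interlacingWeight (s : ι → Bool) (τ : ι) (i : ℕ) : ℤ :=
  if 2 * i < n + 1 ∨ 2 * i = n + 1 ∧ s τ then interlaceUpper ρ μ n τ i
  else interlaceLower ρ μ n τ i

variable {ρ μ n} {w : ℤ} {s : ι → Bool} {τ : ι} {i : ℕ}

theorem interlaceUpper_eq_of_mem (hρ : Function.Involutive ρ) {σ : ι}
    (hσ : σ ∈ ({τ, ρ τ} : Set ι)) : interlaceUpper ρ μ n σ = interlaceUpper ρ μ n τ := by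
  rcases hσ with rfl | rfl
  · rfl
  · funext i
    rw [interlaceUpper, interlaceUpper, hρ, min_comm]

theorem interlaceLower_eq_of_mem (hρ : Function.Involutive ρ) {σ : ι}
    (hσ : σ ∈ ({τ, ρ τ} : Set ι)) : interlaceLower ρ μ n σ = interlaceLower ρ μ n τ := by
  rcases hσ with rfl | rfl
  · rfl
  · funext i
    rw [interlaceLower, interlaceLower, hρ, max_comm]

theorem interlaceLower_le_interlaceUpper
    (hpure : ∀ τ i, 1 ≤ i → i ≤ n + 1 → μ (ρ τ) i = w - μ τ (n + 2 - i))
    (hgood : ∀ τ i, 1 ≤ i → i ≤ n →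
      max (μ τ (i + 1)) (w - μ τ (n + 1 - i)) ≤ min (μ τ i) (w - μ τ (n + 2 - i)))
    (h1 : 1 ≤ i) (h2 : i ≤ n) : interlaceLower ρ μ n τ i ≤ interlaceUpper ρ μ n τ i := by
  have e1 := hpure τ (n + 1 - i) (by omega) (by omega)
  have e2 := hpure τ (n + 2 - i) (by omega) (by omega)
  rw [show n + 2 - (n + 1 - i) = i + 1 by omega] at e1
  rw [show n + 2 - (n + 2 - i) = i by omega] at e2
  have hgood_i := hgood τ i h1 h2
  simp only [interlaceLower, interlaceUpper, e1, e2]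
  omega

theorem interlaceUpper_succ_le (hdom : ∀ τ i, 1 ≤ i → i ≤ n → μ τ (i + 1) ≤ μ τ i)
    (h1 : 1 ≤ i) (h2 : i ≤ n) : interlaceUpper ρ μ n τ (i + 1) ≤ interlaceUpper ρ μ n τ i := by
  have d1 := hdom τ (n + 1 - i) (by omega) (by omega)
  have d2 := hdom (ρ τ) (n + 1 - i) (by omega) (by omega)
  rw [show n + 1 - i + 1 = n + 2 - i by omega] at d1 d2
  simp only [interlaceUpper, show n + 2 - (i + 1) = n + 1 - i by omega]
  omega

theorem interlaceLower_succ_le (hdom : ∀ τ i, 1 ≤ i → i ≤ n → μ τ (i + 1) ≤ μ τ i)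
    (h : i + 1 ≤ n) : interlaceLower ρ μ n τ (i + 1) ≤ interlaceLower ρ μ n τ i := by
  have d1 := hdom τ (n - i) (by omega) (by omega)
  have d2 := hdom (ρ τ) (n - i) (by omega) (by omega)
  rw [show n - i + 1 = n + 1 - i by omega] at d1 d2
  simp only [interlaceLower, show n + 1 - (i + 1) = n - i by omega]
  omega

theorem interlaceLower_reflect (hρ : Function.Involutive ρ)
    (hpure : ∀ τ i, 1 ≤ i → i ≤ n + 1 → μ (ρ τ) i = w - μ τ (n + 2 - i))
    (h1 : 1 ≤ i) (h2 : i ≤ n + 1) :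
    interlaceLower ρ μ n τ (n + 1 - i) = -w - interlaceUpper ρ μ n τ i := by
  have e1 := hpure τ i h1 h2
  have e2 := hpure (ρ τ) i h1 h2
  rw [hρ] at e2
  simp only [interlaceLower, interlaceUpper, Nat.sub_sub_self h2]
  omega

theorem interlacingWeight_of_two_mul_lt (h : 2 * i < n + 1) :
    interlacingWeight ρ μ n s τ i = interlaceUpper ρ μ n τ i :=
  if_pos (Or.inl h)

theorem interlacingWeight_of_lt_two_mul (h : n + 1 < 2 * i) :
    interlacingWeight ρ μ n s τ i = interlaceLower ρ μ n τ i :=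
  if_neg (by omega)

theorem interlacingWeight_mem_Icc (hle : interlaceLower ρ μ n τ i ≤ interlaceUpper ρ μ n τ i) :
    interlacingWeight ρ μ n s τ i ∈
      Set.Icc (interlaceLower ρ μ n τ i) (interlaceUpper ρ μ n τ i) := by
  unfold interlacingWeight
  split_ifs
  · exact ⟨hle, le_rfl⟩
  · exact ⟨le_rfl, hle⟩

theorem interlacingWeight_pure (hρ : Function.Involutive ρ)
    (hpure : ∀ τ i, 1 ≤ i → i ≤ n + 1 → μ (ρ τ) i = w - μ τ (n + 2 - i))
    (hs : ∀ τ, s (ρ τ) = !s τ) (h1 : 1 ≤ i) (h2 : i ≤ n) :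
    interlacingWeight ρ μ n s (ρ τ) i = -w - interlacingWeight ρ μ n s τ (n + 1 - i) := by
  have hU := interlaceUpper_eq_of_mem (μ := μ) (n := n) hρ (τ := τ) (σ := ρ τ) (by simp)
  have hL := interlaceLower_eq_of_mem (μ := μ) (n := n) hρ (τ := τ) (σ := ρ τ) (by simp)
  rcases lt_trichotomy (2 * i) (n + 1) with h | h | h
  · rw [interlacingWeight_of_two_mul_lt h, interlacingWeight_of_lt_two_mul (by omega),
      interlaceLower_reflect hρ hpure h1 (by omega), hU]
    ring
  · have hmid : n + 1 - i = i := by omega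
    have hsum := interlaceLower_reflect (τ := τ) hρ hpure h1 (by omega)
    rw [hmid] at hsum
    simp only [interlacingWeight, hmid, h, hs, hU, hL]
    cases s τ <;>
      simp only [lt_self_iff_false, Bool.not_true, Bool.not_false, Bool.false_eq_true, and_false,
        and_self, or_true, or_self, ↓reduceIte] <;> omega
  · have hsum := interlaceLower_reflect (τ := τ) hρ hpure (i := n + 1 - i) (by omega) (by omega)
    rw [Nat.sub_sub_self (by omega)] at hsum
    rw [interlacingWeight_of_lt_two_mul h, interlacingWeight_of_two_mul_lt (by omega), hL, hsum]

theorem interlacingWeight_succ_le (hρ : Function.Involutive ρ)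
    (hdom : ∀ τ i, 1 ≤ i → i ≤ n → μ τ (i + 1) ≤ μ τ i)
    (hle : ∀ τ i, 1 ≤ i → i ≤ n → interlaceLower ρ μ n τ i ≤ interlaceUpper ρ μ n τ i)
    {σ τ' : ι} (hσ : σ ∈ ({τ, ρ τ} : Set ι)) (hτ' : τ' ∈ ({τ, ρ τ} : Set ι))
    (h1 : 1 ≤ i) (h2 : i < n) :
    interlacingWeight ρ μ n s σ (i + 1) ≤ interlacingWeight ρ μ n s τ' i := by
  by_cases h : 2 * i < n + 1
  · calc interlacingWeight ρ μ n s σ (i + 1)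
        ≤ interlaceUpper ρ μ n σ (i + 1) := (interlacingWeight_mem_Icc (hle σ _ (by omega) h2)).2
      _ = interlaceUpper ρ μ n τ (i + 1) := by rw [interlaceUpper_eq_of_mem hρ hσ]
      _ ≤ interlaceUpper ρ μ n τ i := interlaceUpper_succ_le hdom h1 h2.le
      _ = interlaceUpper ρ μ n τ' i := by rw [interlaceUpper_eq_of_mem hρ hτ']
      _ = interlacingWeight ρ μ n s τ' i := (interlacingWeight_of_two_mul_lt h).symm
  · calc interlacingWeight ρ μ n s σ (i + 1)
        = interlaceLower ρ μ n σ (i + 1) := interlacingWeight_of_lt_two_mul (by omega)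
      _ = interlaceLower ρ μ n τ (i + 1) := by rw [interlaceLower_eq_of_mem hρ hσ]
      _ ≤ interlaceLower ρ μ n τ i := interlaceLower_succ_le hdom h2
      _ = interlaceLower ρ μ n τ' i := by rw [interlaceLower_eq_of_mem hρ hτ']
      _ ≤ interlacingWeight ρ μ n s τ' i := (interlacingWeight_mem_Icc (hle τ' i h1 h2.le)).1

theorem interlacingWeight_goodPosition (hρ : Function.Involutive ρ)
    (hdom : ∀ τ i, 1 ≤ i → i ≤ n → μ τ (i + 1) ≤ μ τ i)
    (hpure : ∀ τ i, 1 ≤ i → i ≤ n + 1 → μ (ρ τ) i = w - μ τ (n + 2 - i))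
    (hle : ∀ τ i, 1 ≤ i → i ≤ n → interlaceLower ρ μ n τ i ≤ interlaceUpper ρ μ n τ i)
    (hs : ∀ τ, s (ρ τ) = !s τ) (h1 : 1 ≤ i) (h2 : i < n) :
    max (interlacingWeight ρ μ n s τ (i + 1)) (-w - interlacingWeight ρ μ n s τ (n - i)) ≤
      min (interlacingWeight ρ μ n s τ i) (-w - interlacingWeight ρ μ n s τ (n + 1 - i)) := by
  rw [show n - i = n + 1 - (i + 1) by omega,
    ← interlacingWeight_pure hρ hpure hs (by omega) h2,
    ← interlacingWeight_pure hρ hpure hs h1 h2.le]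
  have hτ : τ ∈ ({τ, ρ τ} : Set ι) := by simp
  have hρτ : ρ τ ∈ ({τ, ρ τ} : Set ι) := by simp
  exact max_le
    (le_min (interlacingWeight_succ_le hρ hdom hle hτ hτ h1 h2)
      (interlacingWeight_succ_le hρ hdom hle hτ hρτ h1 h2))
    (le_min (interlacingWeight_succ_le hρ hdom hle hρτ hτ h1 h2)
      (interlacingWeight_succ_le hρ hdom hle hρτ hρτ h1 h2))

theorem interlacingWeight_strongInterlace (hρ : Function.Involutive ρ)
    (hle : ∀ τ i, 1 ≤ i → i ≤ n → interlaceLower ρ μ n τ i ≤ interlaceUpper ρ μ n τ i)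
    {τ₁ τ₂ : ι} (hτ₁ : τ₁ ∈ ({τ, ρ τ} : Set ι)) (hτ₂ : τ₂ ∈ ({τ, ρ τ} : Set ι))
    (h1 : 1 ≤ i) (h2 : i ≤ n) :
    interlacingWeight ρ μ n s τ₂ i ≤ -μ τ₁ (n + 2 - i) ∧
      -μ τ₁ (n + 1 - i) ≤ interlacingWeight ρ μ n s τ₂ i := by
  obtain ⟨hlo, hhi⟩ := interlacingWeight_mem_Icc (s := s) (hle τ₂ i h1 h2)
  rw [interlaceLower_eq_of_mem hρ hτ₂] at hlo
  rw [interlaceUpper_eq_of_mem hρ hτ₂] at hhi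
  rcases hτ₁ with rfl | rfl
  · exact ⟨hhi.trans (min_le_left _ _), (le_max_left _ _).trans hlo⟩
  · exact ⟨hhi.trans (min_le_right _ _), (le_max_right _ _).trans hlo⟩

end Interlace

open NumberField.ComplexEmbedding

theorem stmt_5_general (F : Type*) [Field F]
    (hti : ∀ τ : F →+* ℂ, ¬ NumberField.ComplexEmbedding.IsReal τ)
    (n : ℕ) (w : ℤ)
    (μ : (F →+* ℂ) → ℕ → ℤ)
    (hdom : ∀ τ : F →+* ℂ, ∀ i, 1 ≤ i → i ≤ n → μ τ (i + 1) ≤ μ τ i)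
    (hpure : ∀ τ : F →+* ℂ, ∀ i, 1 ≤ i → i ≤ n + 1 →
      μ ((starRingEnd ℂ).comp τ) i = w - μ τ (n + 2 - i))
    (hgood : ∀ τ : F →+* ℂ, ∀ i, 1 ≤ i → i ≤ n →
      max (μ τ (i + 1)) (w - μ τ (n + 1 - i)) ≤ min (μ τ i) (w - μ τ (n + 2 - i))) :
    ∃ w' : ℤ, w' % 2 = w % 2 ∧
    ∃ ν : (F →+* ℂ) → ℕ → ℤ,
      (∀ τ : F →+* ℂ, ∀ i, 1 ≤ i → i < n → ν τ (i + 1) ≤ ν τ i) ∧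
      (∀ τ : F →+* ℂ, ∀ i, 1 ≤ i → i ≤ n →
        ν ((starRingEnd ℂ).comp τ) i = w' - ν τ (n + 1 - i)) ∧
      (∀ τ : F →+* ℂ, ∀ i, 1 ≤ i → i < n →
        max (ν τ (i + 1)) (w' - ν τ (n - i)) ≤ min (ν τ i) (w' - ν τ (n + 1 - i))) ∧
      ∃ m₀ : ℤ, ∀ τ : F →+* ℂ,
        ∀ τ₁ ∈ ({τ, (starRingEnd ℂ).comp τ} : Set (F →+* ℂ)),
        ∀ τ₂ ∈ ({τ, (starRingEnd ℂ).comp τ} : Set (F →+* ℂ)),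
        ∀ i, 1 ≤ i → i ≤ n →
          ν τ₂ i + m₀ ≤ -μ τ₁ (n + 2 - i) ∧ -μ τ₁ (n + 1 - i) ≤ ν τ₂ i + m₀ := by
  have hρ := involutive_conjugate F
  obtain ⟨s, hs⟩ := hρ.exists_bool_apply_eq_not fun τ h => hti τ (isReal_iff.2 h)
  -- `conjugate τ` unfolds to `(starRingEnd ℂ).comp τ`, so `hpure` is purity for `conjugate`.
  have hle (τ : F →+* ℂ) (i : ℕ) (h1 : 1 ≤ i) (h2 : i ≤ n) :=
    interlaceLower_le_interlaceUpper (ρ := conjugate) (τ := τ) hpure hgood h1 h2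
  refine ⟨-w, by omega, interlacingWeight conjugate μ n s,
    fun τ i h1 h2 =>
      interlacingWeight_succ_le hρ hdom hle (Set.mem_insert τ _) (Set.mem_insert τ _) h1 h2,
    fun τ i h1 h2 => interlacingWeight_pure hρ hpure hs h1 h2,
    fun τ i h1 h2 => interlacingWeight_goodPosition hρ hdom hpure hle hs h1 h2, 0,
    fun τ τ₁ hτ₁ τ₂ hτ₂ i h1 h2 => ?_⟩
  simpa only [add_zero] using interlacingWeight_strongInterlace hρ hle hτ₁ hτ₂ h1 h2

/-- CM (totally imaginary) case of Lemma 7.2 on weights.  Here the conjugate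
embedding `ρτ` is formalized as `(starRingEnd ℂ).comp τ`. -/
theorem stmt_5 (F : Type*) [Field F] [NumberField F]
    (hti : ∀ τ : F →+* ℂ, ¬ NumberField.ComplexEmbedding.IsReal τ)
    (n : ℕ) (hn : 1 ≤ n) (w : ℤ)
    (μ : (F →+* ℂ) → ℕ → ℤ)
    (hdom : ∀ τ : F →+* ℂ, ∀ i, 1 ≤ i → i ≤ n → μ τ (i + 1) ≤ μ τ i)
    (hpure : ∀ τ : F →+* ℂ, ∀ i, 1 ≤ i → i ≤ n + 1 →
      μ ((starRingEnd ℂ).comp τ) i = w - μ τ (n + 2 - i))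
    (hgood : ∀ τ : F →+* ℂ, ∀ i, 1 ≤ i → i ≤ n →
      max (μ τ (i + 1)) (w - μ τ (n + 1 - i)) ≤ min (μ τ i) (w - μ τ (n + 2 - i))) :
    ∃ w' : ℤ, w' % 2 = w % 2 ∧
    ∃ ν : (F →+* ℂ) → ℕ → ℤ,
      (∀ τ : F →+* ℂ, ∀ i, 1 ≤ i → i < n → ν τ (i + 1) ≤ ν τ i) ∧
      (∀ τ : F →+* ℂ, ∀ i, 1 ≤ i → i ≤ n →
        ν ((starRingEnd ℂ).comp τ) i = w' - ν τ (n + 1 - i)) ∧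
      (∀ τ : F →+* ℂ, ∀ i, 1 ≤ i → i < n →
        max (ν τ (i + 1)) (w' - ν τ (n - i)) ≤ min (ν τ i) (w' - ν τ (n + 1 - i))) ∧
      ∃ m₀ : ℤ, ∀ τ : F →+* ℂ,
        ∀ τ₁ ∈ ({τ, (starRingEnd ℂ).comp τ} : Set (F →+* ℂ)),
        ∀ τ₂ ∈ ({τ, (starRingEnd ℂ).comp τ} : Set (F →+* ℂ)),
        ∀ i, 1 ≤ i → i ≤ n →
          ν τ₂ i + m₀ ≤ -μ τ₁ (n + 2 - i) ∧ -μ τ₁ (n + 1 - i) ≤ ν τ₂ i + m₀ :=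
  stmt_5_general F hti n w μ hdom hpure hgood
end

section
/- Let m ≥ 0, set n = 2m+1, and let w be an odd integer. Let μ_1 > μ_2 > ⋯ > μ_{n+1} be strictly decreasing integers satisfying μ_i + μ_{n+2−i} = w for all 1 ≤ i ≤ n+1. Then there exist integers ν_1 ≥ ν_2 ≥ ⋯ ≥ ν_n satisfying ν_i + ν_{n+1−i} = 1 − w for all 1 ≤ i ≤ n and −μ_{n+1−i} ≤ ν_i ≤ −μ_{n+2−i} for all 1 ≤ i ≤ n. -/
/-!
Pass to the dual `a i = -μ (n + 2 - i)`, a strictly decreasing tuple of length `n + 1 = 2m + 2`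
that is pure of the odd weight `-w`; it must be interlaced by a tuple `ν` of length `n` that is
pure of weight `1 - w`. On the first half take the upper bounds `ν i = a i`, on the second half
the lower bounds shifted by one, `ν i = a (i + 1) + 1` (still in their intervals because `a` is
strictly decreasing), and in the middle `ν (m + 1) = (1 - w) / 2`, which lies between `a (m + 2)`
and `a (m + 1)` because these two sum to the odd number `-w`. Interlacing forces `ν` to be
decreasing.
-/

def IsPure (N : ℕ) (w : ℤ) (μ : ℕ → ℤ) : Prop :=
  ∀ i, 1 ≤ i → i ≤ N → μ i + μ (N + 1 - i) = w

def IsDominant (N : ℕ) (μ : ℕ → ℤ) : Prop :=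
  ∀ i, 1 ≤ i → i < N → μ (i + 1) ≤ μ i

def IsStrictlyDominant (N : ℕ) (μ : ℕ → ℤ) : Prop :=
  ∀ i, 1 ≤ i → i < N → μ (i + 1) < μ i

def Interlaces (N : ℕ) (ν a : ℕ → ℤ) : Prop :=
  ∀ i, 1 ≤ i → i ≤ N → a (i + 1) ≤ ν i ∧ ν i ≤ a i

def dual (N : ℕ) (μ : ℕ → ℤ) (i : ℕ) : ℤ :=
  -μ (N + 1 - i)

section

variable {N m : ℕ} {v w : ℤ} {μ ν a : ℕ → ℤ}

theorem IsPure.dual (h : IsPure N w μ) : IsPure N (-w) (dual N μ) := by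
  intro i hi hiN
  have hsum := h (N + 1 - i) (by omega) (by omega)
  rw [Nat.sub_sub_self (by omega : i ≤ N + 1)] at hsum
  simp only [_root_.dual, Nat.sub_sub_self (by omega : i ≤ N + 1)]
  linarith

theorem IsStrictlyDominant.dual (h : IsStrictlyDominant N μ) :
    IsStrictlyDominant N (dual N μ) := by
  intro i hi hiN
  have hlt := h (N - i) (by omega) (by omega)
  rw [show N - i + 1 = N + 1 - i by omega] at hlt
  simp only [_root_.dual, Nat.add_sub_add_right]
  linarith

theorem Interlaces.isDominant (h : Interlaces N ν a) : IsDominant N ν :=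
  fun i hi hiN => (h (i + 1) (by omega) hiN).2.trans (h i hi hiN.le).1

def pureInterlacing (m : ℕ) (v : ℤ) (a : ℕ → ℤ) (i : ℕ) : ℤ :=
  if i ≤ m then a i else if i = m + 1 then (v + 1) / 2 else a (i + 1) + 1

theorem isPure_pureInterlacing (hv : Odd v) (ha : IsPure (2 * m + 2) v a) :
    IsPure (2 * m + 1) (v + 1) (pureInterlacing m v a) := by
  intro i hi hiN
  obtain ⟨k, rfl⟩ := hv
  unfold pureInterlacing
  rcases lt_trichotomy i (m + 1) with hlt | rfl | hgt
  · have hsum := ha i hi (by omega)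
    rw [if_pos (by omega), if_neg (by omega), if_neg (by omega),
      show 2 * m + 1 + 1 - i + 1 = 2 * m + 2 + 1 - i by omega]
    linarith
  · rw [if_neg (by omega), if_pos rfl, show 2 * m + 1 + 1 - (m + 1) = m + 1 by omega,
      if_neg (by omega), if_pos rfl]
    omega
  · have hsum := ha (i + 1) (by omega) (by omega)
    rw [show 2 * m + 2 + 1 - (i + 1) = 2 * m + 1 + 1 - i by omega] at hsum
    rw [if_neg (by omega), if_neg (by omega), if_pos (by omega)]
    linarith

theorem interlaces_pureInterlacing (hv : Odd v) (hstrict : IsStrictlyDominant (2 * m + 2) a)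
    (ha : IsPure (2 * m + 2) v a) :
    Interlaces (2 * m + 1) (pureInterlacing m v a) a := by
  intro i hi hiN
  have hstep := hstrict i hi (by omega)
  unfold pureInterlacing
  rcases lt_trichotomy i (m + 1) with hlt | rfl | hgt
  · rw [if_pos (by omega)]
    omega
  · have hsum := ha (m + 1) (by omega) (by omega)
    rw [show 2 * m + 2 + 1 - (m + 1) = m + 1 + 1 by omega] at hsum
    obtain ⟨k, rfl⟩ := hv
    rw [if_neg (by omega), if_pos rfl]
    omega
  · rw [if_neg (by omega), if_neg (by omega)]
    omega

end

/-- Remark 7.4: the strictly dominant, odd purity-weight case over a totally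
real field (per real embedding), with `n = 2 * m + 1`. -/
theorem stmt_8 (m : ℕ) (w : ℤ) (hw : Odd w) (μ : ℕ → ℤ)
    (hμ : ∀ i j, 1 ≤ i → i < j → j ≤ 2 * m + 2 → μ j < μ i)
    (hpure : ∀ i, 1 ≤ i → i ≤ 2 * m + 2 → μ i + μ (2 * m + 3 - i) = w) :
    ∃ ν : ℕ → ℤ,
      (∀ i, 1 ≤ i → i < 2 * m + 1 → ν (i + 1) ≤ ν i) ∧
      (∀ i, 1 ≤ i → i ≤ 2 * m + 1 → ν i + ν (2 * m + 2 - i) = 1 - w) ∧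
      (∀ i, 1 ≤ i → i ≤ 2 * m + 1 → -μ (2 * m + 2 - i) ≤ ν i ∧ ν i ≤ -μ (2 * m + 3 - i)) := by
  have hstrict : IsStrictlyDominant (2 * m + 2) μ := fun i hi hiN => hμ i (i + 1) hi (by omega) hiN
  have hv : Odd (-w) := hw.neg
  have hdual := IsPure.dual (N := 2 * m + 2) hpure
  have hint := interlaces_pureInterlacing hv hstrict.dual hdual
  refine ⟨pureInterlacing m (-w) (dual (2 * m + 2) μ), hint.isDominant, ?_, fun i hi hiN => ?_⟩
  · simpa only [IsPure, neg_add_eq_sub] using isPure_pureInterlacing hv hdual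
  · simpa only [dual, Nat.add_sub_add_right] using hint i hi hiN
end

section
/- Let d⁺, d⁻ ∈ ℕ and d = d⁺ + d⁻. For y ∈ M_d(ℂ), let f⁺(y) denote the determinant of the upper-left d⁺ × d⁺ submatrix of y (rows and columns indexed by the first d⁺ indices). Let p ∈ M_d(ℂ) be a matrix whose upper-right d⁺ × d⁻ block vanishes (p_{kl} = 0 whenever k is among the first d⁺ indices and l is among the last d⁻ indices), let x ∈ M_d(ℂ) be arbitrary, let h⁺ ∈ M_{d⁺}(ℂ) and h⁻ ∈ M_{d⁻}(ℂ), and let D ∈ M_d(ℂ) be the block-diagonal matrix with diagonal blocks h⁺ and h⁻. Then f⁺(p · x · D) = f⁺(p) · det(h⁺) · f⁺(x). -/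
/-! Reindex `Fin (d⁺ + d⁻)` as `Fin d⁺ ⊕ Fin d⁻`, so that `f⁺` becomes the determinant of the
upper-left block. That block of a product `A * B` is `A₁₁ * B₁₁ + A₁₂ * B₂₁`, and the correction
term vanishes for both products in `p * x * D`: `p₁₂ = 0` and `D₂₁ = 0`. Hence the upper-left
block of `p * x * D` is `p₁₁ * x₁₁ * h⁺`, and the determinant is multiplicative. -/

namespace Matrix

variable {l m n o r s α : Type*}

theorem submatrix_castAdd_eq_toBlocks₁₁ {a b c d : ℕ} (M : Matrix (Fin (a + b)) (Fin (c + d)) α) :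
    M.submatrix (Fin.castAdd b) (Fin.castAdd d)
      = (M.submatrix finSumFinEquiv finSumFinEquiv).toBlocks₁₁ :=
  rfl

variable [Fintype n] [Fintype o] [NonUnitalNonAssocSemiring α]

theorem toBlocks₁₁_mul (A : Matrix (l ⊕ m) (n ⊕ o) α) (B : Matrix (n ⊕ o) (r ⊕ s) α) :
    (A * B).toBlocks₁₁ = A.toBlocks₁₁ * B.toBlocks₁₁ + A.toBlocks₁₂ * B.toBlocks₂₁ := by
  conv_lhs => rw [← fromBlocks_toBlocks A, ← fromBlocks_toBlocks B, fromBlocks_multiply]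
  exact toBlocks_fromBlocks₁₁ _ _ _ _

theorem toBlocks₁₁_mul_of_toBlocks₁₂_eq_zero {A : Matrix (l ⊕ m) (n ⊕ o) α}
    (hA : A.toBlocks₁₂ = 0) (B : Matrix (n ⊕ o) (r ⊕ s) α) :
    (A * B).toBlocks₁₁ = A.toBlocks₁₁ * B.toBlocks₁₁ := by
  rw [toBlocks₁₁_mul, hA, Matrix.zero_mul, add_zero]

theorem toBlocks₁₁_mul_of_toBlocks₂₁_eq_zero (A : Matrix (l ⊕ m) (n ⊕ o) α)
    {B : Matrix (n ⊕ o) (r ⊕ s) α} (hB : B.toBlocks₂₁ = 0) :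
    (A * B).toBlocks₁₁ = A.toBlocks₁₁ * B.toBlocks₁₁ := by
  rw [toBlocks₁₁_mul, hB, Matrix.mul_zero, add_zero]

end Matrix

/-- Transformation law for the relative invariant `f⁺` (Section 3.2):
the determinant of the upper-left `d⁺ × d⁺` submatrix transforms under
left multiplication by a lower block-triangular matrix `p` and right
multiplication by the block-diagonal matrix `D = diag(h⁺, h⁻)` by the factor
`f⁺(p) · det h⁺`. -/
theorem stmt_10 (dp dm : ℕ)
    (p x : Matrix (Fin (dp + dm)) (Fin (dp + dm)) ℂ)
    (hplus : Matrix (Fin dp) (Fin dp) ℂ) (hminus : Matrix (Fin dm) (Fin dm) ℂ)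
    (D : Matrix (Fin (dp + dm)) (Fin (dp + dm)) ℂ)
    (hD : D = (Matrix.fromBlocks hplus 0 0 hminus).submatrix
      finSumFinEquiv.symm finSumFinEquiv.symm)
    (hp : ∀ (k : Fin dp) (l : Fin dm), p (Fin.castAdd dm k) (Fin.natAdd dp l) = 0) :
    ((p * x * D).submatrix (Fin.castAdd dm : Fin dp → Fin (dp + dm))
        (Fin.castAdd dm : Fin dp → Fin (dp + dm))).det
      = (p.submatrix (Fin.castAdd dm : Fin dp → Fin (dp + dm))
          (Fin.castAdd dm : Fin dp → Fin (dp + dm))).det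
        * hplus.det
        * (x.submatrix (Fin.castAdd dm : Fin dp → Fin (dp + dm))
            (Fin.castAdd dm : Fin dp → Fin (dp + dm))).det := by
  have hp₁₂ : (p.submatrix finSumFinEquiv finSumFinEquiv).toBlocks₁₂ = 0 := funext₂ hp
  have hD_blocks :
      D.submatrix finSumFinEquiv finSumFinEquiv = Matrix.fromBlocks hplus 0 0 hminus := by
    simp [hD]
  have h_upperLeft : ((p * x * D).submatrix finSumFinEquiv finSumFinEquiv).toBlocks₁₁
      = (p.submatrix finSumFinEquiv finSumFinEquiv).toBlocks₁₁
        * (x.submatrix finSumFinEquiv finSumFinEquiv).toBlocks₁₁ * hplus := by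
    rw [← Matrix.submatrix_mul_equiv (e₂ := finSumFinEquiv),
      ← Matrix.submatrix_mul_equiv (e₂ := finSumFinEquiv), hD_blocks,
      Matrix.toBlocks₁₁_mul_of_toBlocks₂₁_eq_zero _ (Matrix.toBlocks_fromBlocks₂₁ _ _ _ _),
      Matrix.toBlocks₁₁_mul_of_toBlocks₁₂_eq_zero hp₁₂, Matrix.toBlocks_fromBlocks₁₁]
  simp only [Matrix.submatrix_castAdd_eq_toBlocks₁₁, h_upperLeft, Matrix.det_mul]
  ring
end

section
/- Let t ≥ 1 be an integer, let w_M, w_N ∈ ℤ, and let p_1 < p_2 < ⋯ < p_{t+1} and a_1 < a_2 < ⋯ < a_t be strictly increasing integer sequences. Define the conjugate sequences p̄_i := w_M − p_{t+2−i} (1 ≤ i ≤ t+1) and ā_j := w_N − a_{t+1−j} (1 ≤ j ≤ t). Assume there exists Q ∈ ℤ such that for every P ∈ {p, p̄}, every A ∈ {a, ā}, and every 1 ≤ i ≤ t one has −P_{t+2−i} < A_i + Q ≤ −P_{t+1−i} (the strong interlace condition with shift Q). Then for all 1 ≤ i ≤ t+1, 1 ≤ j ≤ t, P ∈ {p, p̄},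 and A ∈ {a, ā}, one has 2(P_i + A_j) ≠ w_M + w_N. -/
/-!
Write `S = P i + A j`. The strong interlace condition, together with the monotonicity of `A`,
pins down the sign of `S + Q`: it is `≤ 0` exactly when `i + j ≤ t + 1`. Hodge symmetry sends
`(P, A, i, j)` to the conjugate data `(P̄, Ā, t + 2 - i, t + 1 - j)`, which again satisfies the
interlace condition, has Hodge sum `w_M + w_N - S`, and lies on the other side of `t + 1`.
If `2 S = w_M + w_N` both sums equal `S`, so `S + Q` would be both `≤ 0` and `> 0`.
-/

open Set

def StrongInterlace (t : ℕ) (Q : ℤ) (P A : ℕ → ℤ) : Prop :=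
  ∀ i, 1 ≤ i → i ≤ t → -P (t + 2 - i) < A i + Q ∧ A i + Q ≤ -P (t + 1 - i)

namespace StrongInterlace

variable {t : ℕ} {Q : ℤ} {P A : ℕ → ℤ}

theorem add_add_nonpos_iff (hPA : StrongInterlace t Q P A) (hA : MonotoneOn A (Icc 1 t))
    {i j : ℕ} (hi : 1 ≤ i) (hit : i ≤ t + 1) (hj : 1 ≤ j) (hjt : j ≤ t) :
    P i + A j + Q ≤ 0 ↔ i + j ≤ t + 1 := by
  constructor
  · intro hS
    by_contra! hij
    have hmono : A (t + 2 - i) ≤ A j := hA ⟨by omega, by omega⟩ ⟨hj, hjt⟩ (by omega)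
    have hlt := (hPA (t + 2 - i) (by omega) (by omega)).1
    rw [show t + 2 - (t + 2 - i) = i by omega] at hlt
    linarith
  · intro hij
    have hmono : A j ≤ A (t + 1 - i) := hA ⟨hj, hjt⟩ ⟨by omega, by omega⟩ (by omega)
    have hle := (hPA (t + 1 - i) (by omega) (by omega)).2
    rw [show t + 1 - (t + 1 - i) = i by omega] at hle
    linarith

end StrongInterlace

theorem monotoneOn_Icc_of_eq_sub_reflect {n : ℕ} {w : ℤ} {A B : ℕ → ℤ}
    (hA : MonotoneOn A (Icc 1 n)) (hB : ∀ j, 1 ≤ j → j ≤ n → B j = w - A (n + 1 - j)) :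
    MonotoneOn B (Icc 1 n) := by
  rintro i ⟨hi, hin⟩ j ⟨hj, hjn⟩ hij
  rw [hB i hi hin, hB j hj hjn]
  have := hA (a := n + 1 - j) (b := n + 1 - i)
    ⟨by omega, by omega⟩ ⟨by omega, by omega⟩ (by omega)
  linarith

theorem add_eq_of_eq_sub_reflect {N : ℕ} {w : ℤ} {A B : ℕ → ℤ}
    (hB : ∀ i, 1 ≤ i → i < N → B i = w - A (N - i)) {i : ℕ} (hi : 1 ≤ i) (hiN : i < N) :
    A i + B (N - i) = w ∧ B i + A (N - i) = w := by
  constructor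
  · rw [hB (N - i) (by omega) (by omega), show N - (N - i) = i by omega]
    ring
  · rw [hB i hi hiN]
    ring

theorem two_mul_add_ne_of_strongInterlace {t : ℕ} {Q wM wN : ℤ} {P Pbar A Abar : ℕ → ℤ}
    (hPA : StrongInterlace t Q P A) (hPAbar : StrongInterlace t Q Pbar Abar)
    (hA : MonotoneOn A (Icc 1 t)) (hAbar : MonotoneOn Abar (Icc 1 t))
    (hP : ∀ i, 1 ≤ i → i ≤ t + 1 → P i + Pbar (t + 2 - i) = wM)
    (hAconj : ∀ j, 1 ≤ j → j ≤ t → A j + Abar (t + 1 - j) = wN)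
    {i j : ℕ} (hi : 1 ≤ i) (hit : i ≤ t + 1) (hj : 1 ≤ j) (hjt : j ≤ t) :
    2 * (P i + A j) ≠ wM + wN := by
  intro hmid
  have hsum : Pbar (t + 2 - i) + Abar (t + 1 - j) = P i + A j := by
    linarith [hP i hi hit, hAconj j hj hjt]
  have hsign := hPA.add_add_nonpos_iff hA hi hit hj hjt
  have hsignbar := hPAbar.add_add_nonpos_iff hAbar (i := t + 2 - i) (j := t + 1 - j)
    (by omega) (by omega) (by omega) (by omega)
  rw [hsum, hsign] at hsignbar
  omega

theorem stmt_13_general (t : ℕ) (wM wN : ℤ) (p a pbar abar : ℕ → ℤ)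
    (ha : ∀ i j, 1 ≤ i → i < j → j ≤ t → a i < a j)
    (hpbar : ∀ i, 1 ≤ i → i ≤ t + 1 → pbar i = wM - p (t + 2 - i))
    (habar : ∀ j, 1 ≤ j → j ≤ t → abar j = wN - a (t + 1 - j))
    (hQ : ∃ Q : ℤ, ∀ P ∈ ({p, pbar} : Set (ℕ → ℤ)), ∀ A ∈ ({a, abar} : Set (ℕ → ℤ)),
      ∀ i, 1 ≤ i → i ≤ t → -P (t + 2 - i) < A i + Q ∧ A i + Q ≤ -P (t + 1 - i)) :
    ∀ P ∈ ({p, pbar} : Set (ℕ → ℤ)), ∀ A ∈ ({a, abar} : Set (ℕ → ℤ)),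
    ∀ i j, 1 ≤ i → i ≤ t + 1 → 1 ≤ j → j ≤ t →
      2 * (P i + A j) ≠ wM + wN := by
  obtain ⟨Q, hQ⟩ := hQ
  have hpa : StrongInterlace t Q p a := hQ p (by simp) a (by simp)
  have hpabar : StrongInterlace t Q p abar := hQ p (by simp) abar (by simp)
  have hpbara : StrongInterlace t Q pbar a := hQ pbar (by simp) a (by simp)
  have hpbarabar : StrongInterlace t Q pbar abar := hQ pbar (by simp) abar (by simp)
  have ha_mono : MonotoneOn a (Icc 1 t) :=
    StrictMonoOn.monotoneOn fun i hi j hj hij => ha i j hi.1 hij hj.2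
  have habar_mono := monotoneOn_Icc_of_eq_sub_reflect ha_mono habar
  have hp_conj i (hi : 1 ≤ i) (hit : i ≤ t + 1) :=
    add_eq_of_eq_sub_reflect (N := t + 2) (fun k hk hkN => hpbar k hk (by omega))
      hi (by omega)
  have ha_conj j (hj : 1 ≤ j) (hjt : j ≤ t) :=
    add_eq_of_eq_sub_reflect (N := t + 1) (fun k hk hkN => habar k hk (by omega)) hj (by omega)
  rintro P (rfl | rfl) A (rfl | rfl) i j hi hit hj hjt
  · exact two_mul_add_ne_of_strongInterlace hpa hpbarabar ha_mono habar_mono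
      (fun i hi hit => (hp_conj i hi hit).1) (fun j hj hjt => (ha_conj j hj hjt).1) hi hit hj hjt
  · exact two_mul_add_ne_of_strongInterlace hpabar hpbara habar_mono ha_mono
      (fun i hi hit => (hp_conj i hi hit).1) (fun j hj hjt => (ha_conj j hj hjt).2) hi hit hj hjt
  · exact two_mul_add_ne_of_strongInterlace hpbara hpabar ha_mono habar_mono
      (fun i hi hit => (hp_conj i hi hit).2) (fun j hj hjt => (ha_conj j hj hjt).1) hi hit hj hjt
  · exact two_mul_add_ne_of_strongInterlace hpbarabar hpa habar_mono ha_mono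
      (fun i hi hit => (hp_conj i hi hit).2) (fun j hj hjt => (ha_conj j hj hjt).2) hi hit hj hjt

/-- Corollary 4.7: under the strong interlace condition no Hodge sum attains
the middle value `(wM + wN) / 2`. -/
theorem stmt_13 (t : ℕ) (ht : 1 ≤ t) (wM wN : ℤ) (p a pbar abar : ℕ → ℤ)
    (hp : ∀ i j, 1 ≤ i → i < j → j ≤ t + 1 → p i < p j)
    (ha : ∀ i j, 1 ≤ i → i < j → j ≤ t → a i < a j)
    (hpbar : ∀ i, 1 ≤ i → i ≤ t + 1 → pbar i = wM - p (t + 2 - i))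
    (habar : ∀ j, 1 ≤ j → j ≤ t → abar j = wN - a (t + 1 - j))
    (hQ : ∃ Q : ℤ, ∀ P ∈ ({p, pbar} : Set (ℕ → ℤ)), ∀ A ∈ ({a, abar} : Set (ℕ → ℤ)),
      ∀ i, 1 ≤ i → i ≤ t → -P (t + 2 - i) < A i + Q ∧ A i + Q ≤ -P (t + 1 - i)) :
    ∀ P ∈ ({p, pbar} : Set (ℕ → ℤ)), ∀ A ∈ ({a, abar} : Set (ℕ → ℤ)),
    ∀ i j, 1 ≤ i → i ≤ t + 1 → 1 ≤ j → j ≤ t →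
      2 * (P i + A j) ≠ wM + wN :=
  stmt_13_general t wM wN p a pbar abar ha hpbar habar hQ
end
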